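/- Under the assumptions of the nested Galerkin problems (U_H ∈ V_H and U_h ∈ V_h solving ⟨U, v⟩ + k·a(U, v) = ⟨g, v⟩ on their respective spaces, V_H ⊆ V_h), the coarsening error bound ‖U_H - U_h‖² ≤ ‖U_h - I_H U_h‖² + k·a(U_h - I_H U_h, U_h - I_H U_h) holds for every I_H U_h ∈ V_H. -/

import Mathlib

/-!
With the energy form `b(u, v) = ⟪u, v⟫ + k a(u, v)`, which is symmetric and positive semidefinite,
subtracting the two Galerkin equations on `V_H` shows that `e = U_H - U_h` is `b`-orthogonal to
`V_H`. For `w ∈ V_H` we have `U_h - w = (U_H - w) - e` with `U_H - w ∈ V_H`, so Pythagoras for `b`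
gives `b(e, e) ≤ b(U_h - w, U_h - w)`, and `‖e‖² ≤ b(e, e)` because `k a(e, e) ≥ 0`.
-/

open LinearMap (BilinForm)

namespace LinearMap.BilinForm

section CommRing

variable {R M : Type*} [CommRing R] [AddCommGroup M] [Module R M] {B : BilinForm R M}

theorem IsSymm.apply_sub_sub_eq_add (hB : B.IsSymm) {x y : M} (h : B x y = 0) :
    B (y - x) (y - x) = B y y + B x x := by
  have hyx : B y x = 0 := (hB.eq y x).trans h
  simp only [map_sub, LinearMap.sub_apply, h, hyx]
  ring

theorem apply_sub_eq_zero_of_galerkin {V W : Submodule R M} (hVW : V ≤ W) {f : M → R} {u w : M}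
    (hu : ∀ v ∈ V, B u v = f v) (hw : ∀ v ∈ W, B w v = f v) {v : M} (hv : v ∈ V) :
    B (u - w) v = 0 := by
  rw [map_sub, LinearMap.sub_apply, hu v hv, hw v (hVW hv), sub_self]

end CommRing

theorem IsPosSemidef.apply_sub_le_of_galerkin {R M : Type*} [CommRing R] [PartialOrder R]
    [IsOrderedRing R] [AddCommGroup M] [Module R M] {B : BilinForm R M} (hB : B.IsPosSemidef)
    {V : Submodule R M} {u w z : M} (hu : u ∈ V) (horth : ∀ v ∈ V, B (u - w) v = 0)
    (hz : z ∈ V) : B (u - w) (u - w) ≤ B (w - z) (w - z) := by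
  have hdecomp : w - z = (u - z) - (u - w) := by abel
  rw [hdecomp, hB.isSymm.apply_sub_sub_eq_add (horth _ (V.sub_mem hu hz))]
  exact le_add_of_nonneg_left (hB.isNonneg.nonneg _)

end LinearMap.BilinForm

theorem isPosSemidef_innerₗ (H : Type*) [NormedAddCommGroup H] [InnerProductSpace ℝ H] :
    LinearMap.BilinForm.IsPosSemidef (innerₗ H) :=
  ⟨⟨fun x y => real_inner_comm y x⟩, ⟨fun _ => real_inner_self_nonneg⟩⟩

theorem stmt_16_general {H : Type*} [NormedAddCommGroup H] [InnerProductSpace ℝ H]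
    (a : LinearMap.BilinForm ℝ H)
    (hsym : ∀ x y : H, a x y = a y x)
    (hpsd : ∀ v : H, 0 ≤ a v v)
    (VH Vh : Submodule ℝ H) (hsub : VH ≤ Vh)
    (k : ℝ) (hk : 0 < k) (g : H) (UH Uh : H)
    (hUH : UH ∈ VH)
    (heqH : ∀ v ∈ VH, (inner ℝ UH v : ℝ) + k * a UH v = inner ℝ g v)
    (heqh : ∀ v ∈ Vh, (inner ℝ Uh v : ℝ) + k * a Uh v = inner ℝ g v)
    (IHUh : H) (hIH : IHUh ∈ VH) :
    ‖UH - Uh‖^2 ≤ ‖Uh - IHUh‖^2 + k * a (Uh - IHUh) (Uh - IHUh) := by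
  set b : LinearMap.BilinForm ℝ H := innerₗ H + k • a
  have hb : ∀ u v, b u v = inner ℝ u v + k * a u v := fun _ _ => rfl
  have hb_psd : b.IsPosSemidef :=
    (isPosSemidef_innerₗ H).add (LinearMap.BilinForm.IsPosSemidef.smul ⟨⟨hsym⟩, ⟨hpsd⟩⟩ hk.le)
  have horth : ∀ v ∈ VH, b (UH - Uh) v = 0 := fun v hv =>
    LinearMap.BilinForm.apply_sub_eq_zero_of_galerkin hsub (f := inner ℝ g) heqH heqh hv
  have hbest := hb_psd.apply_sub_le_of_galerkin hUH horth hIH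
  rw [hb, hb, real_inner_self_eq_norm_sq, real_inner_self_eq_norm_sq] at hbest
  have ha_nonneg : 0 ≤ k * a (UH - Uh) (UH - Uh) := mul_nonneg hk.le (hpsd _)
  linarith

theorem stmt_16 {H : Type*} [NormedAddCommGroup H] [InnerProductSpace ℝ H]
    [CompleteSpace H]
    (a : LinearMap.BilinForm ℝ H)
    (hcont : Continuous fun p : H × H => a p.1 p.2)
    (hsym : ∀ x y : H, a x y = a y x)
    (hpsd : ∀ v : H, 0 ≤ a v v)
    (VH Vh : Submodule ℝ H) (hVH : IsClosed (VH : Set H))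
    (hVh : IsClosed (Vh : Set H)) (hsub : VH ≤ Vh)
    (k : ℝ) (hk : 0 < k) (g : H) (UH Uh : H)
    (hUH : UH ∈ VH) (hUh : Uh ∈ Vh)
    (heqH : ∀ v ∈ VH, (inner ℝ UH v : ℝ) + k * a UH v = inner ℝ g v)
    (heqh : ∀ v ∈ Vh, (inner ℝ Uh v : ℝ) + k * a Uh v = inner ℝ g v)
    (IHUh : H) (hIH : IHUh ∈ VH) :
    ‖UH - Uh‖^2 ≤ ‖Uh - IHUh‖^2 + k * a (Uh - IHUh) (Uh - IHUh) :=
  stmt_16_general a hsym hpsd VH Vh hsub k hk g UH Uh hUH heqH heqh IHUh hIH
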